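/- For every γ > 0 there exists a constant θ* ∈ (0,1) such that for every c with 0 < c < θ*/3, the equation f(R) = c, where f(R) := (1 − γ/R)·(R·coth R − 1)/R² for R > 0, has exactly two positive roots R₁ < R₂, and moreover f'(R₁) > 0 and f'(R₂) < 0. -/

import Mathlib

/-!
On `(0, γ]` the factor `1 - γ/R` makes `f ≤ 0`, and `f > 0` beyond `γ`. The numerator of `f'`
is positive at `R = γ`, hence `f` increases on some `[γ, a]`, and it is negative for
`R ≥ 2γ + 4`, so `f` decreases on `[2γ + 4, ∞)` towards `0`. On the compact interval between
these two monotone pieces `f` has a positive minimum `m`; every level `c ∈ (0, m)` is then taken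
exactly once on each monotone piece and nowhere else.
-/

/-- The stationary radius function `f(R) = (1 - γ/R)·(R·coth R - 1)/R²`. -/
noncomputable def statf (γ R : ℝ) : ℝ :=
  (1 - γ / R) * (R * (Real.cosh R / Real.sinh R) - 1) / R ^ 2

open Real Set Filter Topology

theorem exists_two_preimages_of_hump {f : ℝ → ℝ} {γ a b : ℝ} (hγa : γ < a) (hab : a < b)
    (hcont : ContinuousOn f (Ici γ)) (hfγ : f γ ≤ 0) (hpos : ∀ x, γ < x → 0 < f x)
    (hmono : StrictMonoOn f (Icc γ a)) (hanti : StrictAntiOn f (Ici b))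
    (htend : Tendsto f atTop (𝓝 0)) :
    ∃ m > 0, ∀ c, 0 < c → c < m → ∃ R₁ ∈ Ioo γ a, ∃ R₂ ∈ Ioi b, f R₁ = c ∧ f R₂ = c ∧
      ∀ R, γ ≤ R → f R = c → R = R₁ ∨ R = R₂ := by
  obtain ⟨x₀, hx₀, hmin⟩ := isCompact_Icc.exists_isMinOn (nonempty_Icc.2 hab.le)
    (hcont.mono fun x hx => hγa.le.trans hx.1)
  have hmin : ∀ x ∈ Icc a b, f x₀ ≤ f x := isMinOn_iff.1 hmin
  refine ⟨f x₀, hpos x₀ (hγa.trans_le hx₀.1), fun c hc hcm => ?_⟩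
  have hca : c < f a := hcm.trans_le (hmin a (left_mem_Icc.2 hab.le))
  have hcb : c < f b := hcm.trans_le (hmin b (right_mem_Icc.2 hab.le))
  obtain ⟨R₁, hR₁, hfR₁⟩ := intermediate_value_Ioo hγa.le (hcont.mono Icc_subset_Ici_self)
    ⟨hfγ.trans_lt hc, hca⟩
  obtain ⟨X, hfX, hbX⟩ := ((htend.eventually (gt_mem_nhds hc)).and (eventually_ge_atTop b)).exists
  have hbX : b < X := hbX.lt_of_ne (by rintro rfl; linarith)
  obtain ⟨R₂, hR₂, hfR₂⟩ := intermediate_value_Ioo' hbX.le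
    (hcont.mono fun x hx => (hγa.trans hab).le.trans hx.1) ⟨hfX, hcb⟩
  refine ⟨R₁, hR₁, R₂, hR₂.1, hfR₁, hfR₂, fun R hγR hfR => ?_⟩
  rcases le_or_gt R a with hRa | haR
  · exact .inl (hmono.injOn ⟨hγR, hRa⟩ (Ioo_subset_Icc_self hR₁) (hfR.trans hfR₁.symm))
  rcases le_or_gt R b with hRb | hbR
  · linarith [hmin R ⟨haR.le, hRb⟩]
  · exact .inr (hanti.injOn hbR.le hR₂.1.le (hfR.trans hfR₂.symm))

lemma sinh_lt_mul_cosh {R : ℝ} (hR : 0 < R) : sinh R < R * cosh R := by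
  have hmono : StrictMonoOn (fun x : ℝ => x * cosh x - sinh x) (Ici 0) := by
    refine strictMonoOn_of_deriv_pos (convex_Ici 0) (by fun_prop) fun x hx => ?_
    rw [interior_Ici] at hx
    have hd : HasDerivAt (fun x : ℝ => x * cosh x - sinh x) (x * sinh x) x :=
      ((hasDerivAt_id x).mul (hasDerivAt_cosh x)).sub (hasDerivAt_sinh x) |>.congr_deriv
        (by simp only [id]; ring)
    rw [hd.deriv]
    exact mul_pos hx (sinh_pos_iff.2 hx)
  simpa using hmono self_mem_Ici hR.le hR

lemma mul_cosh_sub_sinh_le_mul_sinh (R : ℝ) :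
    R * cosh R - sinh R ≤ R * sinh R := by
  have hE := exp_pos R
  have h2R : 2 * R + 1 ≤ exp R * exp R := by
    rw [← exp_add, ← two_mul]; exact add_one_le_exp _
  rw [cosh_eq, sinh_eq, exp_neg, ← sub_nonneg]
  have : R * ((exp R - (exp R)⁻¹) / 2) - (R * ((exp R + (exp R)⁻¹) / 2) - (exp R - (exp R)⁻¹) / 2)
      = (exp R * exp R - 1 - 2 * R) / (2 * exp R) := by
    field_simp; ring
  rw [this]
  exact div_nonneg (by linarith) (by positivity)

lemma statf_eq (γ : ℝ) {R : ℝ} (hR : R ≠ 0) :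
    statf γ R = (R - γ) * (R * cosh R - sinh R) / (R ^ 3 * sinh R) := by
  have hs : sinh R ≠ 0 := sinh_ne_zero.2 hR
  unfold statf
  field_simp

lemma statf_nonpos {γ R : ℝ} (hR : 0 < R) (hRγ : R ≤ γ) : statf γ R ≤ 0 := by
  have hs := sinh_pos_iff.2 hR
  rw [statf_eq γ hR.ne']
  exact div_nonpos_of_nonpos_of_nonneg
    (mul_nonpos_of_nonpos_of_nonneg (by linarith) (by linarith [sinh_lt_mul_cosh hR]))
    (by positivity)

lemma statf_pos {γ R : ℝ} (hγ : 0 ≤ γ) (hγR : γ < R) : 0 < statf γ R := by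
  have hR := hγ.trans_lt hγR
  have hs := sinh_pos_iff.2 hR
  rw [statf_eq γ hR.ne']
  exact div_pos (mul_pos (by linarith) (by linarith [sinh_lt_mul_cosh hR])) (by positivity)

lemma statf_le_inv {γ R : ℝ} (hγ : 0 ≤ γ) (hR : 0 < R) : statf γ R ≤ R⁻¹ := by
  have hs := sinh_pos_iff.2 hR
  have hk := mul_cosh_sub_sinh_le_mul_sinh R
  rw [statf_eq γ hR.ne', div_le_iff₀ (by positivity)]
  calc (R - γ) * (R * cosh R - sinh R) ≤ R * (R * sinh R) :=
        mul_le_mul (by linarith) hk (by linarith [sinh_lt_mul_cosh hR]) hR.le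
    _ = R⁻¹ * (R ^ 3 * sinh R) := by field_simp

lemma tendsto_statf_atTop {γ : ℝ} (hγ : 0 ≤ γ) : Tendsto (statf γ) atTop (𝓝 0) := by
  have hlarge : ∀ᶠ R in atTop, 0 < R ∧ γ < R :=
    (eventually_gt_atTop 0).and (eventually_gt_atTop γ)
  refine tendsto_of_tendsto_of_tendsto_of_le_of_le' tendsto_const_nhds tendsto_inv_atTop_zero
    ?_ ?_
  · filter_upwards [hlarge] with R hR using (statf_pos hγ hR.2).le
  · filter_upwards [hlarge] with R hR using statf_le_inv hγ hR.1

noncomputable def statfNum (γ R : ℝ) : ℝ :=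
  R * sinh R * (R * cosh R - sinh R) + (R - γ) * R ^ 2 * sinh R ^ 2
    - (R - γ) * (R * cosh R - sinh R) * (3 * sinh R + R * cosh R)

lemma continuous_statfNum (γ : ℝ) : Continuous (statfNum γ) := by
  unfold statfNum; fun_prop

lemma hasDerivAt_statf (γ : ℝ) {R : ℝ} (hR : R ≠ 0) :
    HasDerivAt (statf γ) (statfNum γ R / (R ^ 4 * sinh R ^ 2)) R := by
  have hs : sinh R ≠ 0 := sinh_ne_zero.2 hR
  have h1 : HasDerivAt (fun x : ℝ => 1 - γ / x) (γ / R ^ 2) R :=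
    ((hasDerivAt_const R γ).div (hasDerivAt_id R) hR).const_sub 1 |>.congr_deriv
      (by simp only [id]; ring)
  have h2 := ((hasDerivAt_id R).mul ((hasDerivAt_cosh R).div (hasDerivAt_sinh R) hs)).sub_const 1
  refine (h1.mul h2).div (hasDerivAt_pow 2 R) (by positivity) |>.congr_deriv ?_
  simp only [id, Pi.mul_apply, Pi.div_apply, statfNum]
  field_simp
  ring

lemma continuousOn_statf (γ : ℝ) : ContinuousOn (statf γ) (Ioi 0) := fun _ hR =>
  (hasDerivAt_statf γ (ne_of_gt hR)).continuousAt.continuousWithinAt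

lemma deriv_statf (γ : ℝ) {R : ℝ} (hR : R ≠ 0) :
    deriv (statf γ) R = statfNum γ R / (R ^ 4 * sinh R ^ 2) :=
  (hasDerivAt_statf γ hR).deriv

lemma statfNum_self_pos {γ : ℝ} (hγ : 0 < γ) : 0 < statfNum γ γ := by
  have h : statfNum γ γ = γ * sinh γ * (γ * cosh γ - sinh γ) := by unfold statfNum; ring
  rw [h]
  exact mul_pos (mul_pos hγ (sinh_pos_iff.2 hγ)) (by linarith [sinh_lt_mul_cosh hγ])

lemma statfNum_neg {γ R : ℝ} (hγ : 0 ≤ γ) (hR : 2 * γ + 4 ≤ R) : statfNum γ R < 0 := by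
  have hR0 : 0 < R := by linarith
  have hs := sinh_pos_iff.2 hR0
  have hsc : sinh R ≤ cosh R := by linarith [cosh_sub_sinh R, exp_pos (-R)]
  set k := R * cosh R - sinh R
  have hk_le : k ≤ R * sinh R := mul_cosh_sub_sinh_le_mul_sinh R
  have hk_ge : (R - 1) * sinh R ≤ k := by nlinarith
  have hRcosh : R * cosh R = k + sinh R := by ring
  have hfirst : R * sinh R * k ≤ R ^ 2 * sinh R ^ 2 := by
    nlinarith [mul_le_mul_of_nonneg_left hk_le (mul_pos hR0 hs).le]
  have hlast : (R - γ) * ((R - 1) * sinh R) * ((R + 3) * sinh R) ≤ (R - γ) * k * (4 * sinh R + k) :=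
    mul_le_mul (mul_le_mul_of_nonneg_left hk_ge (by linarith)) (by linarith) (by nlinarith)
      (mul_nonneg (by linarith) (by nlinarith))
  -- `R - γ ≥ R/2 + 2` gives `(R - γ)(2R - 3) ≥ R² + 5R/2 - 6 > R²`; hence the threshold `2γ + 4`.
  have hpoly : R ^ 2 - (R - γ) * (2 * R - 3) < 0 := by nlinarith
  have hbound : statfNum γ R ≤ sinh R ^ 2 * (R ^ 2 - (R - γ) * (2 * R - 3)) := by
    simp only [statfNum, hRcosh]
    nlinarith
  nlinarith [mul_neg_of_pos_of_neg (pow_pos hs 2) hpoly]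

lemma deriv_statf_neg {γ R : ℝ} (hγ : 0 ≤ γ) (hR : 2 * γ + 4 ≤ R) : deriv (statf γ) R < 0 := by
  have hR0 : 0 < R := by linarith
  have hs := sinh_pos_iff.2 hR0
  rw [deriv_statf γ hR0.ne']
  exact div_neg_of_neg_of_pos (statfNum_neg hγ hR) (by positivity)

lemma strictAntiOn_statf {γ : ℝ} (hγ : 0 ≤ γ) : StrictAntiOn (statf γ) (Ici (2 * γ + 4)) :=
  strictAntiOn_of_deriv_neg (convex_Ici _)
    ((continuousOn_statf γ).mono (Ici_subset_Ioi.2 (by linarith)))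
    fun x hx => deriv_statf_neg hγ (interior_subset hx)

lemma exists_deriv_statf_pos_Icc {γ : ℝ} (hγ : 0 < γ) :
    ∃ a, γ < a ∧ ∀ x ∈ Icc γ a, 0 < deriv (statf γ) x := by
  have hnear : ∀ᶠ x in 𝓝 γ, 0 < deriv (statf γ) x := by
    filter_upwards [eventually_gt_nhds hγ,
      (continuous_statfNum γ).continuousAt.eventually (lt_mem_nhds (statfNum_self_pos hγ))]
      with x hx hnum
    have hs := sinh_pos_iff.2 hx
    rw [deriv_statf γ hx.ne']
    positivity
  exact mem_nhdsGE_iff_exists_Icc_subset.1 (nhdsWithin_le_nhds hnear)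

theorem stmt0 (γ : ℝ) (hγ : 0 < γ) :
    ∃ θ : ℝ, 0 < θ ∧ θ < 1 ∧
      ∀ c : ℝ, 0 < c → c < θ / 3 →
        ∃ R₁ R₂ : ℝ, 0 < R₁ ∧ R₁ < R₂ ∧
          statf γ R₁ = c ∧ statf γ R₂ = c ∧
          (∀ R : ℝ, 0 < R → statf γ R = c → R = R₁ ∨ R = R₂) ∧
          0 < deriv (statf γ) R₁ ∧ deriv (statf γ) R₂ < 0 := by
  obtain ⟨a, hγa, hderiv_pos⟩ := exists_deriv_statf_pos_Icc hγ
  set b := a + 2 * γ + 4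
  have hab : a < b := by linarith
  have hb : 2 * γ + 4 ≤ b := by linarith
  have hcont : ContinuousOn (statf γ) (Ici γ) :=
    (continuousOn_statf γ).mono fun x hx => hγ.trans_le hx
  have hmono : StrictMonoOn (statf γ) (Icc γ a) :=
    strictMonoOn_of_deriv_pos (convex_Icc γ a) (hcont.mono Icc_subset_Ici_self)
      fun x hx => hderiv_pos x (interior_subset hx)
  obtain ⟨m, hm, hroots⟩ := exists_two_preimages_of_hump hγa hab hcont
    (statf_nonpos hγ le_rfl) (fun x => statf_pos hγ.le) hmono
    ((strictAntiOn_statf hγ.le).mono (Ici_subset_Ici.2 hb)) (tendsto_statf_atTop hγ.le)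
  refine ⟨min (1 / 2) m, by positivity, by linarith [min_le_left (1 / 2 : ℝ) m],
    fun c hc hcθ => ?_⟩
  obtain ⟨R₁, hR₁, R₂, hR₂, hfR₁, hfR₂, huniq⟩ :=
    hroots c hc (by linarith [min_le_right (1 / 2 : ℝ) m])
  refine ⟨R₁, R₂, hγ.trans hR₁.1, hR₁.2.trans (hab.trans hR₂), hfR₁, hfR₂,
    fun R hR hfR => huniq R ?_ hfR, hderiv_pos R₁ (Ioo_subset_Icc_self hR₁),
    deriv_statf_neg hγ.le (hb.trans hR₂.le)⟩
  by_contra! hRγ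
  linarith [statf_nonpos hR hRγ.le]
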